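/- arXiv:2502.18270 — 2 statements merged into one kernel-verified Lean document; each statement's English description precedes it below -/
import Mathlib

section
/- Let S be a K-convex monotone semigroup on X with S(t)0 ≥ 0 for all t ≥ 0. Then for all t ≥ 0 and all u, v ∈ X one has |S(t)u − v| ≤ |K(t)u − v| + |K(t)(−u) + v|, where |y| := y ⊔ (−y) denotes the lattice absolute value in Y. -/
/-!
Taking `λ = 0` in `K`-convexity gives `S(t)u ≤ K(t)u`, and taking `λ = 1/2` with `u` and `-u`
gives `0 ≤ S(t)0 ≤ (S(t)u + K(t)(-u))/2`, i.e. `-S(t)u ≤ K(t)(-u)`. Subtracting `v` bounds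
`S(t)u - v` above by `K(t)u - v` and `-(S(t)u - v)` above by `K(t)(-u) + v`, and an element
dominated in this way has absolute value at most the sum of the absolute values of its bounds.
-/

theorem abs_le_abs_add_abs_of_le_of_neg_le {α : Type*} [Lattice α] [AddCommGroup α]
    [AddLeftMono α] {a b c : α} (hab : a ≤ b) (hac : -a ≤ c) : |a| ≤ |b| + |c| :=
  abs_le'.2
    ⟨hab.trans ((le_abs_self b).trans (le_add_of_nonneg_right (abs_nonneg c))),
      hac.trans ((le_abs_self c).trans (le_add_of_nonneg_left (abs_nonneg b)))⟩

section KConvex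

variable {X Y : Type*} [AddCommGroup X] [Module ℝ X]
  [Preorder Y] [AddCommGroup Y] [Module ℝ Y]

def IsKConvex (K S : X → Y) : Prop :=
  ∀ u v : X, ∀ l : ℝ, l ∈ Set.Icc (0 : ℝ) 1 → S (l • u + (1 - l) • v) ≤ l • S u + (1 - l) • K v

variable {K S : X → Y}

theorem IsKConvex.le (hS : IsKConvex K S) (u : X) : S u ≤ K u := by
  simpa using hS u u 0 ⟨le_rfl, zero_le_one⟩

theorem IsKConvex.neg_le [AddLeftMono Y] (hS : IsKConvex K S) (hS0 : 0 ≤ S 0) (u : X) :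
    -S u ≤ K (-u) := by
  have hmid : S 0 ≤ (1 / 2 : ℝ) • (S u + K (-u)) := by
    have h := hS u (-u) (1 / 2) ⟨by norm_num, by norm_num⟩
    convert h using 2
    · module
    · module
  have hhalf : 0 ≤ (1 / 2 : ℝ) • (S u + K (-u)) := hS0.trans hmid
  have hsum : 0 ≤ S u + K (-u) := by
    simpa only [← add_smul, add_halves, one_smul] using add_nonneg hhalf hhalf
  exact neg_le_iff_add_nonneg'.2 hsum

end KConvex

theorem abs_S_sub_le_of_K_convex_general {X Y : Type*}
    [Lattice X] [AddCommGroup X] [Module ℝ X]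
    [Lattice Y] [AddCommGroup Y] [Module ℝ Y]
    [CovariantClass Y Y (· + ·) (· ≤ ·)]
    (ι : X →ₗ[ℝ] Y)
    (hι_order : ∀ u v : X, u ≤ v ↔ ι u ≤ ι v)
    (S : ℝ → X → X) (K : ℝ → X → Y)
    (hKconv : ∀ t : ℝ, 0 ≤ t → ∀ u v : X, ∀ l : ℝ, l ∈ Set.Icc (0 : ℝ) 1 →
      ι (S t (l • u + (1 - l) • v)) ≤ l • ι (S t u) + (1 - l) • K t v)
    (hSpos : ∀ t : ℝ, 0 ≤ t → 0 ≤ S t 0) :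
    ∀ t : ℝ, 0 ≤ t → ∀ u v : X,
      (ι (S t u) - ι v) ⊔ (-(ι (S t u) - ι v)) ≤
        ((K t u - ι v) ⊔ (-(K t u - ι v))) + ((K t (-u) + ι v) ⊔ (-(K t (-u) + ι v))) := by
  intro t ht u v
  have hconv : IsKConvex (K t) (ι ∘ S t) := hKconv t ht
  have hS0 : 0 ≤ ι (S t 0) := by
    simpa only [map_zero] using (hι_order 0 (S t 0)).mp (hSpos t ht)
  refine abs_le_abs_add_abs_of_le_of_neg_le (sub_le_sub_right (hconv.le u) _) ?_
  calc -(ι (S t u) - ι v) = -ι (S t u) + ι v := by abel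
    _ ≤ K t (-u) + ι v := add_le_add_left (hconv.neg_le hS0 u) _

/-- Let `S` be a `K`-convex monotone semigroup on a vector sublattice
`X ⊆ Y` (encoded via a linear lattice-order embedding `ι : X →ₗ[ℝ] Y`) with `S(t)0 ≥ 0`
for all `t ≥ 0`. Then for all `t ≥ 0` and `u, v ∈ X` one has
`|S(t)u − v| ≤ |K(t)u − v| + |K(t)(−u) + v|`, where `|y| = y ⊔ (−y)` in `Y`. -/
theorem abs_S_sub_le_of_K_convex {X Y : Type*}
    [Lattice X] [AddCommGroup X] [Module ℝ X]
    [CovariantClass X X (· + ·) (· ≤ ·)] [PosSMulMono ℝ X]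
    [Lattice Y] [AddCommGroup Y] [Module ℝ Y]
    [CovariantClass Y Y (· + ·) (· ≤ ·)] [PosSMulMono ℝ Y]
    (ι : X →ₗ[ℝ] Y)
    (hι_order : ∀ u v : X, u ≤ v ↔ ι u ≤ ι v)
    (hι_sup : ∀ u v : X, ι (u ⊔ v) = ι u ⊔ ι v)
    (S : ℝ → X → X) (K : ℝ → X → Y)
    (hS0 : ∀ u : X, S 0 u = u)
    (hSsem : ∀ s t : ℝ, 0 ≤ s → 0 ≤ t → ∀ u : X, S t (S s u) = S (t + s) u)
    (hSmono : ∀ t : ℝ, 0 ≤ t → ∀ u v : X, u ≤ v → S t u ≤ S t v)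
    (hKconv : ∀ t : ℝ, 0 ≤ t → ∀ u v : X, ∀ l : ℝ, l ∈ Set.Icc (0 : ℝ) 1 →
      ι (S t (l • u + (1 - l) • v)) ≤ l • ι (S t u) + (1 - l) • K t v)
    (hSpos : ∀ t : ℝ, 0 ≤ t → 0 ≤ S t 0) :
    ∀ t : ℝ, 0 ≤ t → ∀ u v : X,
      (ι (S t u) - ι v) ⊔ (-(ι (S t u) - ι v)) ≤
        ((K t u - ι v) ⊔ (-(K t u - ι v))) + ((K t (-u) + ι v) ⊔ (-(K t (-u) + ι v))) :=
  abs_S_sub_le_of_K_convex_general ι hι_order S K hKconv hSpos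
end

section
/- (Viscosity subsolution property of the semigroup trajectory.) Let S be a K-convex monotone semigroup on X with S(t)0 ≥ 0 for all t ≥ 0, where X and Y are topological vector spaces, the inclusion X → Y is sequentially continuous, the topology of Y is induced by a family of lattice seminorms, and K is strongly right-continuous (for every sequence t_n → 0 with t_n > 0 and every sequence u_n → u₀ in X, K(t_n)u_n → u₀ in Y). Let μ : Y → ℝ be a linear, sequentially continuous, positive functional (μ(y) ≥ 0 whenever y ≥ 0). Fix u₀ ∈ X and set u(s) := S(s)u₀ for s ≥ 0. Let t > 0 and let φ : (0,∞) → X be a function that is differentiable at t, i.e., there is φ'(t) ∈ X such that for every sequence h_n → 0 with h_n ≠ 0 and t + h_n > 0, (φ(t + h_n) − φ(t))/h_n → φ'(t) in X. Assume there exists Lφ(t) ∈ Y such that (S(h)φ(t) − φ(t))/h → Lφ(t) in Y as h ↓ 0 (along every sequence h_n ↓ 0). If μ(φ(t)) = μ(u(t)) and φ(s) ≥ u(s) for all s > 0, then μ(φ'(t)) ≤ μ(Lφ(t)). -/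
/-!
Compare the trajectory with `φ` over one short step `h`. Writing
`φ (t - h) = (1 - h) • φ t + h • w` with `w = φ t - (φ t - φ (t - h)) / h`, monotonicity and the
semigroup law give `S t u₀ ≤ S h (φ (t - h))`, and `K`-convexity splits `S h` along that convex
combination. Applying `μ` and using `μ (φ t) = μ (S t u₀)` yields
`0 ≤ (1 - h) μ((S h (φ t) - φ t) / h) + μ(K h w) - μ(φ t)`. As `h ↓ 0` the quotient tends to
`μ Lφ`, and `w → φ t - φ'` so, by strong right-continuity, `μ (K h w) → μ (φ t - φ')`; in the
limit `0 ≤ μ Lφ - μ φ'`.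
-/

open Filter Topology Set

theorem monotone_of_map_nonneg {Y : Type*} [AddCommGroup Y] [Module ℝ Y] [Preorder Y]
    [AddLeftMono Y] (μ : Y →ₗ[ℝ] ℝ) (hμ : ∀ y : Y, 0 ≤ y → 0 ≤ μ y) : Monotone μ :=
  fun a b hab => by simpa using hμ _ (sub_nonneg.2 hab)

theorem nonneg_of_le_one_sub_mul_add_mul {c x y h : ℝ} (hh : 0 < h)
    (hc : c ≤ (1 - h) * x + h * y) : 0 ≤ (1 - h) * (h⁻¹ * (x - c)) + (y - c) := by
  have key : (1 - h) * (h⁻¹ * (x - c)) + (y - c) = h⁻¹ * ((1 - h) * x + h * y - c) := by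
    field_simp
    ring
  rw [key]
  exact mul_nonneg (inv_nonneg.2 hh.le) (sub_nonneg.2 hc)

theorem tendsto_backward_diffQuot {X : Type*} [AddCommGroup X] [Module ℝ X] [TopologicalSpace X]
    {φ : ℝ → X} {φ' : X} {t : ℝ}
    (hφ : ∀ h : ℕ → ℝ, (∀ n, h n ≠ 0 ∧ 0 < t + h n) → Tendsto h atTop (𝓝 0) →
      Tendsto (fun n => (h n)⁻¹ • (φ (t + h n) - φ t)) atTop (𝓝 φ'))
    {h : ℕ → ℝ} (hh : ∀ n, h n ∈ Ioo 0 t) (hh0 : Tendsto h atTop (𝓝 0)) :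
    Tendsto (fun n => (h n)⁻¹ • (φ t - φ (t - h n))) atTop (𝓝 φ') := by
  have hneg := hφ (fun n => -h n)
    (fun n => ⟨neg_ne_zero.2 (hh n).1.ne', by linarith [(hh n).2]⟩) (by simpa using hh0.neg)
  refine hneg.congr fun n => ?_
  rw [← sub_eq_add_neg, inv_neg, neg_smul, ← smul_neg, neg_sub]

section
variable {X Y : Type*} [AddCommGroup X] [Module ℝ X]
  [Preorder Y] [AddCommGroup Y] [Module ℝ Y] {ι : X →ₗ[ℝ] Y} {μ : Y →ₗ[ℝ] ℝ}

theorem map_le_of_convex_split {T : X → X} {k : X → Y} (hμ : Monotone μ)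
    (hT : ∀ u v : X, ∀ l : ℝ, l ∈ Icc (0 : ℝ) 1 →
      ι (T (l • u + (1 - l) • v)) ≤ l • ι (T u) + (1 - l) • k v)
    {h : ℝ} (hh : h ∈ Ioc 0 1) (a v : X) :
    μ (ι (T v)) ≤ (1 - h) * μ (ι (T a)) + h * μ (k (a - h⁻¹ • (a - v))) := by
  have hsplit : (1 - h) • a + (1 - (1 - h)) • (a - h⁻¹ • (a - v)) = v := by
    rw [sub_sub_cancel, smul_sub, smul_inv_smul₀ hh.1.ne', sub_smul, one_smul]
    abel
  have hle := hT a (a - h⁻¹ • (a - v)) (1 - h) ⟨by linarith [hh.2], by linarith [hh.1]⟩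
  rw [hsplit, sub_sub_cancel] at hle
  simpa only [map_add, map_smul, smul_eq_mul] using hμ hle

theorem diffQuot_add_nonneg_of_touching [Preorder X] {S : ℝ → X → X} {K : ℝ → X → Y}
    (hι : Monotone ι) (hμ : Monotone μ)
    (hSsem : ∀ s t : ℝ, 0 ≤ s → 0 ≤ t → ∀ u : X, S t (S s u) = S (t + s) u)
    (hSmono : ∀ t : ℝ, 0 ≤ t → ∀ u v : X, u ≤ v → S t u ≤ S t v)
    (hKconv : ∀ t : ℝ, 0 ≤ t → ∀ u v : X, ∀ l : ℝ, l ∈ Icc (0 : ℝ) 1 →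
      ι (S t (l • u + (1 - l) • v)) ≤ l • ι (S t u) + (1 - l) • K t v)
    {u₀ : X} {φ : ℝ → X} {t h : ℝ} (hh : h ∈ Ioo 0 (min t 1))
    (htouch : μ (ι (φ t)) = μ (ι (S t u₀))) (hbelow : S (t - h) u₀ ≤ φ (t - h)) :
    0 ≤ (1 - h) * (h⁻¹ * (μ (ι (S h (φ t))) - μ (ι (φ t))))
      + (μ (K h (φ t - h⁻¹ • (φ t - φ (t - h)))) - μ (ι (φ t))) := by
  obtain ⟨hh0, hht, hh1⟩ : 0 < h ∧ h < t ∧ h < 1 := ⟨hh.1, lt_min_iff.1 hh.2⟩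
  have hstep : S t u₀ ≤ S h (φ (t - h)) := by
    have := hSmono h hh0.le _ _ hbelow
    rwa [hSsem _ _ (by linarith) hh0.le, add_sub_cancel] at this
  refine nonneg_of_le_one_sub_mul_add_mul hh0 ?_
  calc μ (ι (φ t)) = μ (ι (S t u₀)) := htouch
    _ ≤ μ (ι (S h (φ (t - h)))) := hμ (hι hstep)
    _ ≤ _ := map_le_of_convex_split hμ (hKconv h hh0.le) ⟨hh0, hh1.le⟩ _ _

end

theorem viscosity_subsolution_of_K_convex_general {X Y : Type*}
    [Lattice X] [AddCommGroup X] [Module ℝ X]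
    [TopologicalSpace X] [IsTopologicalAddGroup X]
    [Lattice Y] [AddCommGroup Y] [Module ℝ Y]
    [CovariantClass Y Y (· + ·) (· ≤ ·)]
    (ι : X →ₗ[ℝ] Y)
    (hι_order : ∀ u v : X, u ≤ v ↔ ι u ≤ ι v)
    (P : Set (Y → ℝ))
    (S : ℝ → X → X) (K : ℝ → X → Y)
    (hSsem : ∀ s t : ℝ, 0 ≤ s → 0 ≤ t → ∀ u : X, S t (S s u) = S (t + s) u)
    (hSmono : ∀ t : ℝ, 0 ≤ t → ∀ u v : X, u ≤ v → S t u ≤ S t v)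
    (hKconv : ∀ t : ℝ, 0 ≤ t → ∀ u v : X, ∀ l : ℝ, l ∈ Set.Icc (0 : ℝ) 1 →
      ι (S t (l • u + (1 - l) • v)) ≤ l • ι (S t u) + (1 - l) • K t v)
    (hKrc : ∀ t : ℕ → ℝ, (∀ n, 0 < t n) → Tendsto t atTop (𝓝 0) →
      ∀ (u : ℕ → X) (u₀ : X), Tendsto u atTop (𝓝 u₀) →
      ∀ p ∈ P, Tendsto (fun n => p (K (t n) (u n) - ι u₀)) atTop (𝓝 0))
    (μ : Y →ₗ[ℝ] ℝ)
    (hμpos : ∀ y : Y, 0 ≤ y → 0 ≤ μ y)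
    (hμcont : ∀ (y : ℕ → Y) (y₀ : Y),
      (∀ p ∈ P, Tendsto (fun n => p (y n - y₀)) atTop (𝓝 0)) →
      Tendsto (fun n => μ (y n)) atTop (𝓝 (μ y₀)))
    (u₀ : X) (t : ℝ) (ht : 0 < t)
    (φ : ℝ → X) (φ' : X)
    (hφdiff : ∀ h : ℕ → ℝ, (∀ n, h n ≠ 0 ∧ 0 < t + h n) → Tendsto h atTop (𝓝 0) →
      Tendsto (fun n => (h n)⁻¹ • (φ (t + h n) - φ t)) atTop (𝓝 φ'))
    (Lφ : Y)
    (hLφ : ∀ h : ℕ → ℝ, (∀ n, 0 < h n) → Tendsto h atTop (𝓝 0) →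
      ∀ p ∈ P, Tendsto
        (fun n => p ((h n)⁻¹ • (ι (S (h n) (φ t)) - ι (φ t)) - Lφ)) atTop (𝓝 0))
    (htouch : μ (ι (φ t)) = μ (ι (S t u₀)))
    (habove : ∀ s : ℝ, 0 < s → S s u₀ ≤ φ s) :
    μ (ι φ') ≤ μ Lφ := by
  have hι : Monotone ι := fun u v huv => (hι_order u v).1 huv
  have hμ := monotone_of_map_nonneg μ hμpos
  obtain ⟨h, -, hh, hh0⟩ := exists_seq_strictAnti_tendsto' (lt_min ht one_pos)
  have hh_pos n : 0 < h n := (hh n).1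
  have hh_lt n : h n < t := (lt_min_iff.1 (hh n).2).1
  have hgen : Tendsto (fun n => (h n)⁻¹ * (μ (ι (S (h n) (φ t))) - μ (ι (φ t))))
      atTop (𝓝 (μ Lφ)) := by
    simpa only [map_smul, map_sub, smul_eq_mul] using hμcont _ _ (hLφ h hh_pos hh0)
  have hquot := tendsto_backward_diffQuot hφdiff (fun n => ⟨hh_pos n, hh_lt n⟩) hh0
  have hK : Tendsto (fun n => μ (K (h n) (φ t - (h n)⁻¹ • (φ t - φ (t - h n)))))
      atTop (𝓝 (μ (ι (φ t - φ')))) :=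
    hμcont _ _ (hKrc h hh_pos hh0 _ _ (tendsto_const_nhds.sub hquot))
  have hstep n := diffQuot_add_nonneg_of_touching hι hμ hSsem hSmono hKconv (hh n) htouch
    (habove _ (sub_pos.2 (hh_lt n)))
  have hlim := (((tendsto_const_nhds (x := (1 : ℝ))).sub hh0).mul hgen).add (hK.sub_const (μ (ι (φ t))))
  have := ge_of_tendsto' hlim hstep
  simp only [sub_zero, one_mul, map_sub] at this
  linarith

/-- (Viscosity subsolution property of the semigroup trajectory.)
`X ⊆ Y` are vector lattices (the inclusion is encoded via a linear lattice-order embedding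
`ι : X →ₗ[ℝ] Y`); `X` is a topological vector space; the topology of `Y` is induced by a
family `P` of lattice seminorms, so that sequential convergence in `Y` means convergence of
all the seminorms of `P` of the differences; the inclusion `X → Y` is sequentially continuous;
`S` is a `K`-convex monotone semigroup with `S(t)0 ≥ 0` and strongly right-continuous `K`;
`μ` is a linear, positive, sequentially continuous functional on `Y`. If `φ` is differentiable
at `t > 0` with derivative `φ'`, `φ(t)` lies in the domain of the generator of `S` at `t`
(with value `Lφ`), `μ(φ(t)) = μ(S(t)u₀)`, and `φ(s) ≥ S(s)u₀` for all `s > 0`, then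
`μ(φ') ≤ μ(Lφ)`. -/
theorem viscosity_subsolution_of_K_convex {X Y : Type*}
    [Lattice X] [AddCommGroup X] [Module ℝ X]
    [CovariantClass X X (· + ·) (· ≤ ·)] [PosSMulMono ℝ X]
    [TopologicalSpace X] [IsTopologicalAddGroup X] [ContinuousSMul ℝ X]
    [Lattice Y] [AddCommGroup Y] [Module ℝ Y]
    [CovariantClass Y Y (· + ·) (· ≤ ·)] [PosSMulMono ℝ Y]
    (ι : X →ₗ[ℝ] Y)
    (hι_order : ∀ u v : X, u ≤ v ↔ ι u ≤ ι v)
    (hι_sup : ∀ u v : X, ι (u ⊔ v) = ι u ⊔ ι v)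
    (P : Set (Y → ℝ))
    (hP_nonneg : ∀ p ∈ P, ∀ y : Y, 0 ≤ p y)
    (hP_add : ∀ p ∈ P, ∀ y z : Y, p (y + z) ≤ p y + p z)
    (hP_smul : ∀ p ∈ P, ∀ (r : ℝ) (y : Y), p (r • y) = |r| * p y)
    (hP_lattice : ∀ p ∈ P, ∀ y z : Y, y ⊔ (-y) ≤ z ⊔ (-z) → p y ≤ p z)
    (hι_seqcont : ∀ (u : ℕ → X) (u₀ : X), Tendsto u atTop (𝓝 u₀) →
      ∀ p ∈ P, Tendsto (fun n => p (ι (u n) - ι u₀)) atTop (𝓝 0))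
    (S : ℝ → X → X) (K : ℝ → X → Y)
    (hS0 : ∀ u : X, S 0 u = u)
    (hSsem : ∀ s t : ℝ, 0 ≤ s → 0 ≤ t → ∀ u : X, S t (S s u) = S (t + s) u)
    (hSmono : ∀ t : ℝ, 0 ≤ t → ∀ u v : X, u ≤ v → S t u ≤ S t v)
    (hKconv : ∀ t : ℝ, 0 ≤ t → ∀ u v : X, ∀ l : ℝ, l ∈ Set.Icc (0 : ℝ) 1 →
      ι (S t (l • u + (1 - l) • v)) ≤ l • ι (S t u) + (1 - l) • K t v)
    (hSpos : ∀ t : ℝ, 0 ≤ t → 0 ≤ S t 0)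
    (hKrc : ∀ t : ℕ → ℝ, (∀ n, 0 < t n) → Tendsto t atTop (𝓝 0) →
      ∀ (u : ℕ → X) (u₀ : X), Tendsto u atTop (𝓝 u₀) →
      ∀ p ∈ P, Tendsto (fun n => p (K (t n) (u n) - ι u₀)) atTop (𝓝 0))
    (μ : Y →ₗ[ℝ] ℝ)
    (hμpos : ∀ y : Y, 0 ≤ y → 0 ≤ μ y)
    (hμcont : ∀ (y : ℕ → Y) (y₀ : Y),
      (∀ p ∈ P, Tendsto (fun n => p (y n - y₀)) atTop (𝓝 0)) →
      Tendsto (fun n => μ (y n)) atTop (𝓝 (μ y₀)))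
    (u₀ : X) (t : ℝ) (ht : 0 < t)
    (φ : ℝ → X) (φ' : X)
    (hφdiff : ∀ h : ℕ → ℝ, (∀ n, h n ≠ 0 ∧ 0 < t + h n) → Tendsto h atTop (𝓝 0) →
      Tendsto (fun n => (h n)⁻¹ • (φ (t + h n) - φ t)) atTop (𝓝 φ'))
    (Lφ : Y)
    (hLφ : ∀ h : ℕ → ℝ, (∀ n, 0 < h n) → Tendsto h atTop (𝓝 0) →
      ∀ p ∈ P, Tendsto
        (fun n => p ((h n)⁻¹ • (ι (S (h n) (φ t)) - ι (φ t)) - Lφ)) atTop (𝓝 0))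
    (htouch : μ (ι (φ t)) = μ (ι (S t u₀)))
    (habove : ∀ s : ℝ, 0 < s → S s u₀ ≤ φ s) :
    μ (ι φ') ≤ μ Lφ :=
  viscosity_subsolution_of_K_convex_general ι hι_order P S K hSsem hSmono hKconv hKrc μ hμpos hμcont
    u₀ t ht φ φ' hφdiff Lφ hLφ htouch habove
end
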